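/- Let {S_i}_{i in α} be a family of overrings of an order S in a simple Artinian ring Q with S = ∩_{i in α} S_i, of finite character. If each S_i is a right Mori order, then S is a right Mori order. In particular, the intersection of finitely many right Mori orders in Q is again a right Mori order. -/

import Mathlib

/-! Basic notions for orders in a simple Artinian ring, following Halimi,
"Right Mori orders". Throughout, `Q` is a ring and `S` a subring of `Q`. -/

section Preamble

variable {Q : Type*} [Ring Q]

/-- `a` is a regular element of the subring `S` of `Q`, i.e. `a ∈ S` and `a` is
neither a left nor a right zero divisor in `S`. -/
def IsRegularElemIn (S : Subring Q) (a : Q) : Prop :=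
  a ∈ S ∧ (∀ b ∈ S, a * b = 0 → b = 0) ∧ (∀ b ∈ S, b * a = 0 → b = 0)

/-- `S` is an order in `Q`: every regular element of `S` is a unit of `Q` and every
element of `Q` is both a left fraction and a right fraction over `S`. -/
def IsOrderIn (S : Subring Q) : Prop :=
  (∀ a : Q, IsRegularElemIn S a → IsUnit a) ∧
  (∀ q : Q, ∃ a b : Q, a ∈ S ∧ IsRegularElemIn S b ∧ b * q = a) ∧
  (∀ q : Q, ∃ a b : Q, a ∈ S ∧ IsRegularElemIn S b ∧ q * b = a)

/-- A subset of `Q` that is a right `S`-submodule of `Q`. -/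
def IsRightModSet (S : Subring Q) (I : Set Q) : Prop :=
  (0 : Q) ∈ I ∧ (∀ x ∈ I, ∀ y ∈ I, x + y ∈ I) ∧ (∀ x ∈ I, -x ∈ I) ∧
    ∀ x ∈ I, ∀ s ∈ S, x * s ∈ I

/-- A subset of `Q` that is a left `S`-submodule of `Q`. -/
def IsLeftModSet (S : Subring Q) (I : Set Q) : Prop :=
  (0 : Q) ∈ I ∧ (∀ x ∈ I, ∀ y ∈ I, x + y ∈ I) ∧ (∀ x ∈ I, -x ∈ I) ∧
    ∀ x ∈ I, ∀ s ∈ S, s * x ∈ I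

/-- A (integral) right ideal of `S`, viewed as a subset of `Q`. -/
def IsRightIdealSet (S : Subring Q) (I : Set Q) : Prop :=
  IsRightModSet S I ∧ I ⊆ (S : Set Q)

/-- A (integral) left ideal of `S`, viewed as a subset of `Q`. -/
def IsLeftIdealSet (S : Subring Q) (I : Set Q) : Prop :=
  IsLeftModSet S I ∧ I ⊆ (S : Set Q)

/-- `(A : B)_r = {q ∈ Q : B q ⊆ A}`. -/
def colonR (A B : Set Q) : Set Q := {q : Q | ∀ b ∈ B, b * q ∈ A}

/-- `(A : B)_l = {q ∈ Q : q B ⊆ A}`. -/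
def colonL (A B : Set Q) : Set Q := {q : Q | ∀ b ∈ B, q * b ∈ A}

/-- `I^ν = (S : (S : I)_l)_r`. -/
def nuR (S : Subring Q) (I : Set Q) : Set Q := colonR (S : Set Q) (colonL (S : Set Q) I)

/-- `^ν I = (S : (S : I)_r)_l`. -/
def nuL (S : Subring Q) (I : Set Q) : Set Q := colonL (S : Set Q) (colonR (S : Set Q) I)

/-- A (fractional) right `S`-ideal: a right `S`-submodule of `Q` containing a regular
element of `S` and with `uI ⊆ S` for some unit `u` of `Q`. -/
def IsRightSIdeal (S : Subring Q) (I : Set Q) : Prop :=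
  IsRightModSet S I ∧ (∃ a ∈ I, IsRegularElemIn S a) ∧
    ∃ u : Qˣ, ∀ x ∈ I, (u : Q) * x ∈ S

/-- A (fractional) left `S`-ideal. -/
def IsLeftSIdeal (S : Subring Q) (I : Set Q) : Prop :=
  IsLeftModSet S I ∧ (∃ a ∈ I, IsRegularElemIn S a) ∧
    ∃ u : Qˣ, ∀ x ∈ I, x * (u : Q) ∈ S

/-- A completely prime right ideal of `S`: a proper right ideal `P` such that for all
`a, b ∈ S`, `aP ⊆ P` and `ab ∈ P` imply `a ∈ P` or `b ∈ P`. -/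
def IsCompletelyPrimeRightIdeal (S : Subring Q) (P : Set Q) : Prop :=
  IsRightIdealSet S P ∧ P ≠ (S : Set Q) ∧
    ∀ a ∈ S, ∀ b ∈ S, (∀ p ∈ P, a * p ∈ P) → a * b ∈ P → a ∈ P ∨ b ∈ P

/-- The right `S`-submodule of `Q` generated by a set `G`. -/
def rightSpan (S : Subring Q) (G : Set Q) : Set Q :=
  ⋂₀ {J : Set Q | IsRightModSet S J ∧ G ⊆ J}

/-- The left `S`-submodule of `Q` generated by a set `G`. -/
def leftSpan (S : Subring Q) (G : Set Q) : Set Q :=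
  ⋂₀ {J : Set Q | IsLeftModSet S J ∧ G ⊆ J}

/-- `I` is a finitely generated right `S`-submodule of `Q`. -/
def IsFGRightModSet (S : Subring Q) (I : Set Q) : Prop :=
  ∃ G : Finset Q, I = rightSpan S ↑G

/-- The ascending chain condition on regular integral right divisorial ideals of `S`. -/
def ACCRightDivisorial (S : Subring Q) : Prop :=
  ∀ f : ℕ → Set Q,
    (∀ n, IsRightIdealSet S (f n) ∧ (∃ a ∈ f n, IsRegularElemIn S a) ∧ nuR S (f n) = f n) →
    (∀ n, f n ⊆ f (n + 1)) → ∃ N, ∀ n, N ≤ n → f n = f N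

/-- The ascending chain condition on regular integral left divisorial ideals of `S`. -/
def ACCLeftDivisorial (S : Subring Q) : Prop :=
  ∀ f : ℕ → Set Q,
    (∀ n, IsLeftIdealSet S (f n) ∧ (∃ a ∈ f n, IsRegularElemIn S a) ∧ nuL S (f n) = f n) →
    (∀ n, f n ⊆ f (n + 1)) → ∃ N, ∀ n, N ≤ n → f n = f N

/-- A right Mori order: an order satisfying the ACC on regular integral right
divisorial ideals. -/
def IsRightMori (S : Subring Q) : Prop := IsOrderIn S ∧ ACCRightDivisorial S

/-- The principal right ideal `aS` of `S`, as a subset of `Q`. -/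
def principalRight (S : Subring Q) (a : Q) : Set Q := {x : Q | ∃ s ∈ S, x = a * s}

/-- The principal left ideal `Sa` of `S`, as a subset of `Q`. -/
def principalLeft (S : Subring Q) (a : Q) : Set Q := {x : Q | ∃ s ∈ S, x = s * a}

/-- A two-sided (integral) ideal of `S`, as a subset of `Q`. -/
def IsTwoSidedIdealSet (S : Subring Q) (I : Set Q) : Prop :=
  IsRightModSet S I ∧ IsLeftModSet S I ∧ I ⊆ (S : Set Q)

/-- A maximal (proper) right ideal of `S`. -/
def IsMaxRightIdeal (S : Subring Q) (M : Set Q) : Prop :=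
  IsRightIdealSet S M ∧ M ≠ (S : Set Q) ∧
    ∀ N, IsRightIdealSet S N → N ≠ (S : Set Q) → M ⊆ N → N = M

/-- A maximal (proper) left ideal of `S`. -/
def IsMaxLeftIdeal (S : Subring Q) (M : Set Q) : Prop :=
  IsLeftIdealSet S M ∧ M ≠ (S : Set Q) ∧
    ∀ N, IsLeftIdealSet S N → N ≠ (S : Set Q) → M ⊆ N → N = M

/-- `S` is local with (Jacobson radical) `M`: `M` is a two-sided ideal which is the
only maximal right ideal and the only maximal left ideal of `S`. -/
def IsLocalWithMax (S : Subring Q) (M : Set Q) : Prop :=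
  IsTwoSidedIdealSet S M ∧
    IsMaxRightIdeal S M ∧ (∀ N, IsMaxRightIdeal S N → N = M) ∧
    IsMaxLeftIdeal S M ∧ (∀ N, IsMaxLeftIdeal S N → N = M)

/-- A local order. -/
def IsLocalOrder (S : Subring Q) : Prop := IsOrderIn S ∧ ∃ M : Set Q, IsLocalWithMax S M

/-- The additive span of the set of products `a * b` with `a ∈ A`, `b ∈ B`. -/
def mulSpan (A B : Set Q) : Set Q :=
  (AddSubgroup.closure {x : Q | ∃ a ∈ A, ∃ b ∈ B, x = a * b} : AddSubgroup Q)

/-- Powers `M^n` of an ideal `M` of `S` (with `M^0 = S`). -/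
def idealPow (S : Subring Q) (M : Set Q) : ℕ → Set Q
  | 0 => (S : Set Q)
  | n + 1 => mulSpan M (idealPow S M n)

/-- A right `τ`-ideal of `S`: a right ideal `J` such that `F^ν ⊆ J` for every finitely
generated right ideal `F ⊆ J`. -/
def IsRightTauIdeal (S : Subring Q) (J : Set Q) : Prop :=
  IsRightIdealSet S J ∧
    ∀ F : Set Q, IsRightIdealSet S F → IsFGRightModSet S F → F ⊆ J → nuR S F ⊆ J

/-- A maximal (proper) right `τ`-ideal of `S`. -/
def IsMaxRightTauIdeal (S : Subring Q) (M : Set Q) : Prop :=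
  IsRightTauIdeal S M ∧ M ≠ (S : Set Q) ∧
    ∀ N, IsRightTauIdeal S N → N ≠ (S : Set Q) → M ⊆ N → N = M

/-- A prime (two-sided) ideal of the order `S`. -/
def IsPrimeIdealSet (S : Subring Q) (P : Set Q) : Prop :=
  IsTwoSidedIdealSet S P ∧ P ≠ (S : Set Q) ∧
    ∀ a ∈ S, ∀ b ∈ S, (∀ s ∈ S, a * s * b ∈ P) → a ∈ P ∨ b ∈ P

/-- A divisorial two-sided (integral) ideal of `S`: `I = I^ν = ^ν I`. -/
def IsDivisorialIdealSet (S : Subring Q) (I : Set Q) : Prop :=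
  IsTwoSidedIdealSet S I ∧ nuR S I = I ∧ nuL S I = I

/-- `D_m(S)`: the set of maximal divisorial (two-sided, integral) ideals of `S`. -/
def maxDivisorialIdeals (S : Subring Q) : Set (Set Q) :=
  {P | IsDivisorialIdealSet S P ∧ P ≠ (S : Set Q) ∧
    ∀ J, IsDivisorialIdealSet S J → J ≠ (S : Set Q) → P ⊆ J → J = P}

/-- `c` is regular modulo the ideal `P` of `S`. -/
def IsRegularModP (S : Subring Q) (P : Set Q) (c : Q) : Prop :=
  c ∈ S ∧ (∀ b ∈ S, c * b ∈ P → b ∈ P) ∧ (∀ b ∈ S, b * c ∈ P → b ∈ P)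

/-- The left order `O_l(M) = {q ∈ Q : qM ⊆ M}` of `M`. -/
def leftOrderOf (M : Set Q) : Set Q := {q : Q | ∀ m ∈ M, q * m ∈ M}

/-- `s` is a unit of the subring `R` of `Q`. -/
def IsUnitIn (R : Subring Q) (s : Q) : Prop :=
  s ∈ R ∧ ∃ t ∈ R, s * t = 1 ∧ t * s = 1

/-- A family of overrings `S = ⋂ᵢ Sᵢ` is of finite character if every nonzero
non-unit of `S` is a non-unit of only finitely many `Sᵢ`. -/
def FiniteCharacter {α : Type*} (S : Subring Q) (F : α → Subring Q) : Prop :=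
  ∀ s ∈ S, s ≠ 0 → ¬IsUnitIn S s → {i : α | ¬IsUnitIn (F i) s}.Finite

/-- `S` is right pseudo-coherent: any (nonempty) finite intersection of principal
right ideals of `S` is a finitely generated right ideal. -/
def RightPseudoCoherent (S : Subring Q) : Prop :=
  ∀ F : Finset Q, ↑F ⊆ (S : Set Q) → F.Nonempty →
    IsFGRightModSet S (⋂ a ∈ F, principalRight S a)

/-- `A :_r x = {s ∈ S : x s ∈ A}`. -/
def colonByElemR (S : Subring Q) (A : Set Q) (x : Q) : Set Q :=
  {s : Q | s ∈ S ∧ x * s ∈ A}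

/-- A `ν`-irreducible right ideal: a right divisorial right ideal which is not the
intersection of two right divisorial right ideals properly containing it. -/
def IsNuIrreducible (S : Subring Q) (I : Set Q) : Prop :=
  IsRightIdealSet S I ∧ nuR S I = I ∧
    ¬∃ A B : Set Q, (IsRightIdealSet S A ∧ nuR S A = A) ∧
      (IsRightIdealSet S B ∧ nuR S B = B) ∧ I ⊂ A ∧ I ⊂ B ∧ I = A ∩ B

/-- A non-commutative (rank one) discrete valuation ring inside `Q`. -/
def IsNCDVR (R : Subring Q) : Prop :=
  IsOrderIn R ∧ ∃ M : Set Q, IsLocalWithMax R M ∧ M ≠ ({0} : Set Q) ∧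
    (∃ p : Q, IsRegularElemIn R p ∧ M = principalRight R p ∧ M = principalLeft R p) ∧
    (⋂ n : ℕ, idealPow R M n) = ({0} : Set Q)

/-- A Krull order in the sense of Marubayashi. -/
def IsKrullOrder (S : Subring Q) : Prop :=
  ∃ (A : Set (Subring Q)) (B : Finset (Subring Q)),
    (∀ R ∈ A, (S : Set Q) ⊆ ↑R ∧ IsNCDVR R) ∧
    (∀ T ∈ B, (S : Set Q) ⊆ ↑T ∧ IsSimpleRing T ∧ IsNoetherianRing T) ∧
    ((S : Set Q) = (⋂ R ∈ A, (R : Set Q)) ∩ ⋂ T ∈ B, (T : Set Q)) ∧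
    ∀ c : Q, IsRegularElemIn S c →
      {R ∈ A | principalRight R c ≠ (R : Set Q)}.Finite ∧
      {R ∈ A | principalLeft R c ≠ (R : Set Q)}.Finite

end Preamble

/-! A right divisorial ideal `I` of `S = ⋂ᵢ Sᵢ` is recovered from its extensions:
`I = ⋂ᵢ (I Sᵢ)^ν`, with `ν` taken in `Sᵢ`. Given an ascending chain `Iₙ` of regular
integral right divisorial ideals, fix a regular element `a ∈ I₀`. By finite character `a`
is a unit of all but finitely many `Sᵢ`, and for those `(Iₙ Sᵢ)^ν = Sᵢ`; for each of the
finitely many others the chain `(Iₙ Sᵢ)^ν` stabilizes because `Sᵢ` is right Mori. -/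

section RightMori

variable {Q : Type*} [Ring Q]

lemma isRightModSet_self (R : Subring Q) : IsRightModSet R (R : Set Q) :=
  ⟨R.zero_mem, fun _ hx _ hy => R.add_mem hx hy, fun _ hx => R.neg_mem hx,
    fun _ hx _ hs => R.mul_mem hx hs⟩

lemma IsRightModSet.subset_of_isUnitIn {R : Subring Q} {I : Set Q} {a : Q}
    (hI : IsRightModSet R I) (ha : a ∈ I) (hu : IsUnitIn R a) : (R : Set Q) ⊆ I := by
  obtain ⟨-, t, ht, hat, -⟩ := hu
  intro s hs
  simpa [← mul_assoc, hat] using hI.2.2.2 a ha (t * s) (R.mul_mem ht hs)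

lemma IsRegularElemIn.of_isUnit {R : Subring Q} {a : Q} (hu : IsUnit a) (ha : a ∈ R) :
    IsRegularElemIn R a :=
  ⟨ha, fun _ _ h => (hu.mul_right_eq_zero).1 h, fun _ _ h => (hu.mul_left_eq_zero).1 h⟩

section rightSpan

variable (R : Subring Q)

lemma isRightModSet_rightSpan (G : Set Q) : IsRightModSet R (rightSpan R G) := by
  refine ⟨Set.mem_sInter.2 fun J hJ => hJ.1.1, ?_, ?_, ?_⟩
  · exact fun x hx y hy => Set.mem_sInter.2 fun J hJ =>
      hJ.1.2.1 x (Set.mem_sInter.1 hx J hJ) y (Set.mem_sInter.1 hy J hJ)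
  · exact fun x hx => Set.mem_sInter.2 fun J hJ => hJ.1.2.2.1 x (Set.mem_sInter.1 hx J hJ)
  · exact fun x hx s hs => Set.mem_sInter.2 fun J hJ =>
      hJ.1.2.2.2 x (Set.mem_sInter.1 hx J hJ) s hs

lemma subset_rightSpan (G : Set Q) : G ⊆ rightSpan R G :=
  fun _ hx => Set.mem_sInter.2 fun _ hJ => hJ.2 hx

lemma rightSpan_subset {G J : Set Q} (hJ : IsRightModSet R J) (hGJ : G ⊆ J) :
    rightSpan R G ⊆ J :=
  fun _ hx => Set.mem_sInter.1 hx J ⟨hJ, hGJ⟩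

lemma rightSpan_mono {G H : Set Q} (h : G ⊆ H) : rightSpan R G ⊆ rightSpan R H :=
  rightSpan_subset R (isRightModSet_rightSpan R H) (h.trans (subset_rightSpan R H))

lemma colonL_rightSpan (G : Set Q) :
    colonL (R : Set Q) (rightSpan R G) = colonL (R : Set Q) G := by
  refine Set.Subset.antisymm (fun c hc b hb => hc b (subset_rightSpan R G hb)) fun c hc => ?_
  -- `{y | c y ∈ R}` is a right `R`-module containing `G`
  have hmod : IsRightModSet R {y : Q | c * y ∈ R} :=
    ⟨by simp, fun x hx y hy => by simpa [mul_add] using R.add_mem hx hy,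
      fun x hx => by simpa using R.neg_mem hx,
      fun x hx s hs => by simpa [mul_assoc] using R.mul_mem hx hs⟩
  exact fun b hb => rightSpan_subset R hmod hc hb

end rightSpan

section nuR

variable (R : Subring Q)

lemma isRightModSet_colonR (B : Set Q) : IsRightModSet R (colonR (R : Set Q) B) :=
  ⟨fun _ _ => by simp,
    fun x hx y hy b hb => by simpa [mul_add] using R.add_mem (hx b hb) (hy b hb),
    fun x hx b hb => by simpa using R.neg_mem (hx b hb),
    fun x hx s hs b hb => by simpa [mul_assoc] using R.mul_mem (hx b hb) hs⟩

lemma subset_nuR (I : Set Q) : I ⊆ nuR R I :=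
  fun q hq _ hc => hc q hq

lemma nuR_mono {I J : Set Q} (h : I ⊆ J) : nuR R I ⊆ nuR R J :=
  fun _ hq c hc => hq c fun b hb => hc b (h hb)

lemma nuR_nuR (I : Set Q) : nuR R (nuR R I) = nuR R I :=
  Set.Subset.antisymm (fun _ hq c hc => hq c fun _ hb => hb c hc) (subset_nuR R _)

lemma nuR_subset {I : Set Q} (h : I ⊆ R) : nuR R I ⊆ R :=
  fun q hq => by simpa using hq 1 fun b hb => by simpa using h hb

lemma nuR_isRegularRightDivisorial {J : Set Q} {a : Q} (hJ : J ⊆ R) (ha : a ∈ J)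
    (hreg : IsRegularElemIn R a) :
    IsRightIdealSet R (nuR R J) ∧ (∃ b ∈ nuR R J, IsRegularElemIn R b) ∧
      nuR R (nuR R J) = nuR R J :=
  ⟨⟨isRightModSet_colonR R _, nuR_subset R hJ⟩, ⟨a, subset_nuR R J ha, hreg⟩, nuR_nuR R J⟩

lemma nuR_rightSpan_eq_of_isUnitIn {I : Set Q} {a : Q} (hI : I ⊆ R) (ha : a ∈ I)
    (hu : IsUnitIn R a) : nuR R (rightSpan R I) = R :=
  Set.Subset.antisymm (nuR_subset R (rightSpan_subset R (isRightModSet_self R) hI))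
    (((isRightModSet_rightSpan R I).subset_of_isUnitIn (subset_rightSpan R I ha) hu).trans
      (subset_nuR R _))

end nuR

variable {α : Type*} {S : Subring Q} {F : α → Subring Q}

lemma subset_of_coe_eq_iInter (hint : (S : Set Q) = ⋂ i, (F i : Set Q)) (i : α) :
    (S : Set Q) ⊆ F i :=
  hint.subset.trans (Set.iInter_subset _ i)

lemma iInter_nuR_rightSpan_subset_nuR (hint : (S : Set Q) = ⋂ i, (F i : Set Q)) (I : Set Q) :
    ⋂ i, nuR (F i) (rightSpan (F i) I) ⊆ nuR S I := by
  intro q hq c hc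
  rw [hint] at hc ⊢
  refine Set.mem_iInter.2 fun i => Set.mem_iInter.1 hq i c ?_
  rw [colonL_rightSpan]
  exact fun b hb => Set.mem_iInter.1 (hc b hb) i

lemma eq_iInter_nuR_rightSpan (hint : (S : Set Q) = ⋂ i, (F i : Set Q)) {I : Set Q}
    (hI : nuR S I = I) : I = ⋂ i, nuR (F i) (rightSpan (F i) I) :=
  Set.Subset.antisymm
    (Set.subset_iInter fun _ => (subset_rightSpan _ I).trans (subset_nuR _ _))
    ((iInter_nuR_rightSpan_subset_nuR hint I).trans hI.subset)

lemma FiniteCharacter.finite_setOf_not_isUnitIn (hint : (S : Set Q) = ⋂ i, (F i : Set Q))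
    (hfc : FiniteCharacter S F) {a : Q} (hreg : IsRegularElemIn S a) :
    {i | ¬IsUnitIn (F i) a}.Finite := by
  by_cases hu : IsUnitIn S a
  · obtain ⟨haS, t, htS, hat, hta⟩ := hu
    have hSF := subset_of_coe_eq_iInter hint
    exact Set.finite_empty.subset fun i hi => hi ⟨hSF i haS, t, hSF i htS, hat, hta⟩
  refine hfc a hreg.1 (fun ha0 => hu ?_) hu
  -- regularity of `0` forces `1 = 0`, so `0` is a unit
  have h10 : (1 : Q) = 0 := hreg.2.1 1 S.one_mem (by simp [ha0])
  exact ⟨hreg.1, 0, S.zero_mem, by simp [ha0, h10], by simp [ha0, h10]⟩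

lemma FiniteCharacter.of_finite [Finite α] (S : Subring Q) (F : α → Subring Q) :
    FiniteCharacter S F :=
  fun _ _ _ _ => Set.toFinite _

theorem ACCRightDivisorial.of_iInter (hS : ∀ a, IsRegularElemIn S a → IsUnit a)
    (hint : (S : Set Q) = ⋂ i, (F i : Set Q)) (hfc : FiniteCharacter S F)
    (hmori : ∀ i, ACCRightDivisorial (F i)) : ACCRightDivisorial S := by
  intro f hf hstep
  obtain ⟨a, ha0, hreg⟩ := (hf 0).2.1
  have hSF := subset_of_coe_eq_iInter hint
  have hfF : ∀ i n, f n ⊆ F i := fun i n => (hf n).1.2.trans (hSF i)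
  have ha : ∀ n, a ∈ f n := fun n => monotone_nat_of_le_succ hstep (Nat.zero_le n) ha0
  have hstable : ∀ i, ∃ N, ∀ n, N ≤ n →
      nuR (F i) (rightSpan (F i) (f n)) = nuR (F i) (rightSpan (F i) (f N)) := fun i =>
    hmori i _
      (fun n => nuR_isRegularRightDivisorial _
        (rightSpan_subset _ (isRightModSet_self _) (hfF i n)) (subset_rightSpan _ _ (ha n))
        (.of_isUnit (hS a hreg) (hSF i hreg.1)))
      (fun n => nuR_mono _ (rightSpan_mono _ (hstep n)))
  choose N hN using hstable
  have hT := hfc.finite_setOf_not_isUnitIn hint hreg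
  refine ⟨hT.toFinset.sup N, fun n hn => ?_⟩
  refine (eq_iInter_nuR_rightSpan hint (hf n).2.2).trans <|
    (Set.iInter_congr fun i => ?_).trans (eq_iInter_nuR_rightSpan hint (hf _).2.2).symm
  by_cases hi : IsUnitIn (F i) a
  · rw [nuR_rightSpan_eq_of_isUnitIn _ (hfF i n) (ha n) hi,
      nuR_rightSpan_eq_of_isUnitIn _ (hfF i _) (ha _) hi]
  · have hNi : N i ≤ hT.toFinset.sup N := Finset.le_sup (hT.mem_toFinset.2 hi)
    rw [hN i n (hNi.trans hn), hN i _ hNi]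

theorem IsRightMori.of_iInter (hS : IsOrderIn S) (hint : (S : Set Q) = ⋂ i, (F i : Set Q))
    (hfc : FiniteCharacter S F) (hmori : ∀ i, ACCRightDivisorial (F i)) : IsRightMori S :=
  ⟨hS, .of_iInter hS.1 hint hfc hmori⟩

end RightMori

theorem rightMori_of_finiteCharacter_family_general
    {Q : Type*} [Ring Q] {α : Type*}
    (S : Subring Q) (hS : IsOrderIn S) (F : α → Subring Q)
    (hint : (S : Set Q) = ⋂ i, (F i : Set Q))
    (hfc : FiniteCharacter S F)
    (hmori : ∀ i, ACCRightDivisorial (F i)) :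
    IsRightMori S ∧
    ∀ (m : ℕ) (G : Fin m → Subring Q) (T : Subring Q), IsOrderIn T →
      (∀ k, (T : Set Q) ⊆ (G k : Set Q) ∧ IsRightMori (G k)) →
      (T : Set Q) = (⋂ k, (G k : Set Q)) → IsRightMori T :=
  ⟨.of_iInter hS hint hfc hmori, fun _ G T hT hG hTG =>
    .of_iInter hT hTG (.of_finite T G) fun k => (hG k).2.2⟩

/-- Corollary 3.10. Let `S = ⋂ᵢ Sᵢ` be a finite-character family of
overrings of an order `S` in a simple Artinian ring `Q`. If each `Sᵢ` is a right Mori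
order, then `S` is a right Mori order; in particular, the intersection of finitely
many right Mori orders is a right Mori order. -/
theorem rightMori_of_finiteCharacter_family
    {Q : Type*} [Ring Q] [IsSimpleRing Q] [IsArtinianRing Q] {α : Type*}
    (S : Subring Q) (hS : IsOrderIn S) (F : α → Subring Q)
    (hover : ∀ i, (S : Set Q) ⊆ (F i : Set Q) ∧ IsOrderIn (F i))
    (hint : (S : Set Q) = ⋂ i, (F i : Set Q))
    (hfc : FiniteCharacter S F)
    (hmori : ∀ i, ACCRightDivisorial (F i)) :
    IsRightMori S ∧
    ∀ (m : ℕ) (G : Fin m → Subring Q) (T : Subring Q), IsOrderIn T →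
      (∀ k, (T : Set Q) ⊆ (G k : Set Q) ∧ IsRightMori (G k)) →
      (T : Set Q) = (⋂ k, (G k : Set Q)) → IsRightMori T :=
  rightMori_of_finiteCharacter_family_general S hS F hint hfc hmori
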